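/- For every real x > 0 and all real parameters a, b with 0 ≤ a ≤ b, the CRRA utility satisfies f_b(x) ≤ f_a(x); that is, for each fixed x > 0 the map θ ↦ f_θ(x) is (weakly) decreasing in θ on [0, ∞). Consequently the subgraphs of the CRRA family are linearly ordered by inclusion. -/
import Mathlib


/-- CRRA utility: `f_θ(x) = (x^(1-θ) - 1)/(1-θ)` for `θ ≠ 1`, `log x` for `θ = 1`. -/
noncomputable def crra (θ x : ℝ) : ℝ :=
  if θ = 1 then Real.log x else (x ^ (1 - θ) - 1) / (1 - θ)

lemma zero_not_mem_uIcc_one {x : ℝ} (hx : 0 < x) : (0:ℝ) ∉ Set.uIcc 1 x := by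
  simp only [Set.mem_uIcc, not_or]
  constructor <;> intro h <;> linarith [h.1, h.2]

lemma crra_eq_integral (θ : ℝ) {x : ℝ} (hx : 0 < x) :
    crra θ x = ∫ t in (1:ℝ)..x, t ^ (-θ) := by
  by_cases hθ : θ = 1
  · subst hθ
    have : ∀ t ∈ Set.uIcc (1:ℝ) x, t ^ (-(1:ℝ)) = t⁻¹ := by
      intro t ht
      have ht0 : t ≠ 0 := by
        intro h; exact zero_not_mem_uIcc_one hx (h ▸ ht)
      rw [Real.rpow_neg_one]
    rw [intervalIntegral.integral_congr this, integral_inv (zero_not_mem_uIcc_one hx)]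
    simp [crra]
  · rw [integral_rpow (Or.inr ⟨by simpa using fun h => hθ (by linarith), zero_not_mem_uIcc_one hx⟩)]
    simp only [crra, if_neg hθ]
    rw [Real.one_rpow]
    ring_nf

/-- For fixed `x > 0`, the CRRA utility `θ ↦ f_θ(x)` is weakly decreasing in `θ` on `[0, ∞)`:
if `0 ≤ a ≤ b` then `f_b(x) ≤ f_a(x)`. -/
theorem crra_antitone_in_theta (x : ℝ) (hx : 0 < x) (a b : ℝ) (ha : 0 ≤ a) (hab : a ≤ b) :
    crra b x ≤ crra a x := by
  rw [crra_eq_integral a hx, crra_eq_integral b hx]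
  have hia : IntervalIntegrable (fun t : ℝ => t ^ (-a)) MeasureTheory.volume 1 x :=
    intervalIntegral.intervalIntegrable_rpow (Or.inr (zero_not_mem_uIcc_one hx))
  have hib : IntervalIntegrable (fun t : ℝ => t ^ (-b)) MeasureTheory.volume 1 x :=
    intervalIntegral.intervalIntegrable_rpow (Or.inr (zero_not_mem_uIcc_one hx))
  rcases le_total 1 x with hx1 | hx1
  · apply intervalIntegral.integral_mono_on hx1 hib hia
    intro t ht
    exact Real.rpow_le_rpow_of_exponent_le (by linarith [ht.1]) (by linarith)
  · rw [← neg_le_neg_iff, ← intervalIntegral.integral_symm, ← intervalIntegral.integral_symm]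
    apply intervalIntegral.integral_mono_on hx1 hia.symm hib.symm
    intro t ht
    have ht0 : 0 < t := lt_of_lt_of_le hx ht.1
    exact Real.rpow_le_rpow_of_exponent_ge ht0 ht.2 (by linarith)
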